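/- In the maximally parallel application step of the target-selection membrane '−' containing the catalyst c, the multiset c l_i' d (a_r')^k (a_{3-r})^m with k ≥ 1: applying rules l_i' → l_j'' and c a_r' → c in the first step erases exactly one copy of a_r', and in the subsequent step the rules l_j'' → (l_j, out), a_r' → (a_r, out), a_{3-r} → (a_{3-r}, out), d → (λ, out) restore the multiset l_j (a_r)^{k-1} (a_{3-r})^m in the surrounding region; moreover, attempting the target out in the first step necessarily introduces the trap symbol #. -/

import Mathlib

/-- Targets of rules in P systems with target selection. -/
inductive Tgt : Type
  | here | out
deriving DecidableEq

/-- A rule of a catalytic P system with target selection (in one membrane):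
non-cooperative `a → (v, tgt)` or catalytic `c a → c v` (target `here`). -/
structure TSRule (O : Type) where
  cata : Bool
  lhs : O
  rhs : Multiset O
  tgt : Tgt

/-- The objects occurring in the decrement gadget of membrane `−`:
the catalyst `c`, the labels `l_i'`, `l_j''`, `l_j`, the dummy symbol `d`,
the register symbols `a_r'`, `a_r`, `a_{3-r}`, and the trap symbol `#`. -/
inductive G : Type
  | c | li' | lj'' | lj | d | ar' | ar | a3r | trap
deriving DecidableEq

open G

/-- The multiset consumed by one application of `ρ` (`c` is the catalyst). -/
def tsLhs (ρ : TSRule G) : Multiset G := if ρ.cata then {c, ρ.lhs} else {ρ.lhs}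

/-- The multiset produced in the membrane by one application of `ρ`
(for a catalytic rule the catalyst stays). -/
def tsHere (ρ : TSRule G) : Multiset G :=
  (if ρ.tgt = Tgt.here then ρ.rhs else 0) + (if ρ.cata then {c} else 0)

/-- The multiset sent to the surrounding region by one application of `ρ`. -/
def tsOut (ρ : TSRule G) : Multiset G := if ρ.tgt = Tgt.out then ρ.rhs else 0

/-- The rules of membrane `−` relevant to the gadget:
`l_i' → l_j''`, `c a_r' → c`, `l_i'' → #`, `c d → c #` (target `here`), and
`l_j'' → (l_j, out)`, `c d → c#`, `d → (λ, out)`, `a_r' → (a_r, out)`,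
`a_{3-r} → (a_{3-r}, out)`, `# → (#, out)`, and `l → (#, out)` for the wrong
labels (here `l_i'` and `l_j`). -/
def Rminus : Set (TSRule G) :=
  {⟨false, li', {lj''}, Tgt.here⟩,
   ⟨true, ar', 0, Tgt.here⟩,
   ⟨false, lj'', {trap}, Tgt.here⟩,
   ⟨true, d, {trap}, Tgt.here⟩,
   ⟨false, lj'', {lj}, Tgt.out⟩,
   ⟨false, d, 0, Tgt.out⟩,
   ⟨false, ar', {ar}, Tgt.out⟩,
   ⟨false, a3r, {a3r}, Tgt.out⟩,
   ⟨false, trap, {trap}, Tgt.out⟩,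
   ⟨false, li', {trap}, Tgt.out⟩,
   ⟨false, lj, {trap}, Tgt.out⟩}

/-- One maximally parallel computation step of the single membrane `−` under target
selection with chosen target `t`: a non-empty multiset `rs` of rules of `R`, all with
target `t`, is applied so that no further rule with target `t` could be added.
A configuration is the pair (contents of membrane `−`, contents of the surrounding
region). -/
def TSStep1 (R : Set (TSRule G)) (t : Tgt) :
    (Multiset G × Multiset G) → (Multiset G × Multiset G) → Prop :=
  fun cfg cfg' => ∃ rs : Multiset (TSRule G),
    rs ≠ 0 ∧ (∀ ρ ∈ rs, ρ ∈ R ∧ ρ.tgt = t) ∧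
    (rs.map tsLhs).sum ≤ cfg.1 ∧
    (∀ ρ ∈ R, ρ.tgt = t → ¬ ((rs.map tsLhs).sum + tsLhs ρ ≤ cfg.1)) ∧
    cfg'.1 = cfg.1 - (rs.map tsLhs).sum + (rs.map tsHere).sum ∧
    cfg'.2 = cfg.2 + (rs.map tsOut).sum

/-!
The intended here-step is checked directly: `l_i' → l_j''` and `c a_r' → c` use up `l_i'` and
the catalyst, and what is left (`d`, the remaining `a_r'`, the `a_{3-r}`) feeds no here-rule.

For the target `out` every rule of `Rminus` is non-cooperative and no two of them share their
left-hand side. A maximal out-step then consumes exactly the objects that have an out-rule, each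
by its unique rule, so the out-step is unique. From `c l_j'' d (a_r')^k (a_{3-r})^m` it is the
intended release step; from `c l_i' d …` it must apply the wrong-label rule `l_i' → (#, out)`.
-/

lemma Multiset.count_le_count_of_not_add_singleton_le {α : Type*} [DecidableEq α]
    {L w : Multiset α} {x : α} (hle : L ≤ w) (h : ¬ L + {x} ≤ w) : w.count x ≤ L.count x := by
  rwa [← le_tsub_iff_left hle, Multiset.singleton_le, Multiset.mem_sub, not_lt] at h

lemma Multiset.eq_of_map_eq_of_injOn {α β : Type*} {f : α → β} {S : Set α} (hf : S.InjOn f)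
    {s₁ s₂ : Multiset α} (h₁ : ∀ a ∈ s₁, a ∈ S) (h₂ : ∀ a ∈ s₂, a ∈ S)
    (h : s₁.map f = s₂.map f) : s₁ = s₂ := by
  rcases isEmpty_or_nonempty α with hα | hα
  · exact Subsingleton.elim _ _
  · have hinv : ∀ s : Multiset α, (∀ a ∈ s, a ∈ S) → (s.map f).map (Function.invFunOn f S) = s :=
      fun s hs => (Multiset.map_map _ _ _).trans <|
        (Multiset.map_congr rfl fun a ha => hf.leftInvOn_invFunOn (hs a ha)).trans
          (Multiset.map_id _)
    rw [← hinv s₁ h₁, h, hinv s₂ h₂]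

section Steps

variable {R : Set (TSRule G)} {t : Tgt}

lemma tsStep1_sum_tsLhs_add {rs : Multiset (TSRule G)} (rest s : Multiset G) (hne : rs ≠ 0)
    (hrs : ∀ ρ ∈ rs, ρ ∈ R ∧ ρ.tgt = t) (hrest : ∀ ρ ∈ R, ρ.tgt = t → ¬ tsLhs ρ ≤ rest) :
    TSStep1 R t ((rs.map tsLhs).sum + rest, s)
      (rest + (rs.map tsHere).sum, s + (rs.map tsOut).sum) :=
  ⟨rs, hne, hrs, le_add_right le_rfl,
    fun ρ hρ ht h => hrest ρ hρ ht ((add_le_add_iff_left _).mp (by rwa [add_comm] at h)),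
    by simp, rfl⟩

structure IsDeterministic (R : Set (TSRule G)) (t : Tgt) : Prop where
  cata_eq_false : ∀ ρ ∈ R, ρ.tgt = t → ρ.cata = false
  lhs_injOn : {ρ | ρ ∈ R ∧ ρ.tgt = t}.InjOn TSRule.lhs

namespace IsDeterministic

lemma sum_map_tsLhs (hR : IsDeterministic R t) {rs : Multiset (TSRule G)}
    (hrs : ∀ ρ ∈ rs, ρ ∈ R ∧ ρ.tgt = t) : (rs.map tsLhs).sum = rs.map TSRule.lhs := by
  rw [← Multiset.sum_map_singleton (rs.map TSRule.lhs), Multiset.map_map]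
  exact congrArg _ (Multiset.map_congr rfl fun ρ hρ => by
    simp [tsLhs, hR.cata_eq_false ρ (hrs ρ hρ).1 (hrs ρ hρ).2])

lemma map_lhs_eq_filter (hR : IsDeterministic R t) {rs : Multiset (TSRule G)} {w : Multiset G}
    (hrs : ∀ ρ ∈ rs, ρ ∈ R ∧ ρ.tgt = t) (hle : (rs.map tsLhs).sum ≤ w)
    (hmax : ∀ ρ ∈ R, ρ.tgt = t → ¬ ((rs.map tsLhs).sum + tsLhs ρ ≤ w)) :
    open Classical in rs.map TSRule.lhs = w.filter (· ∈ TSRule.lhs '' {ρ | ρ ∈ R ∧ ρ.tgt = t}) := by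
  classical
  rw [hR.sum_map_tsLhs hrs] at hle hmax
  ext x
  rw [Multiset.count_filter]
  split_ifs with hx
  · obtain ⟨ρ, ⟨hρR, hρt⟩, rfl⟩ := hx
    refine le_antisymm (Multiset.count_le_of_le _ hle)
      (Multiset.count_le_count_of_not_add_singleton_le hle ?_)
    simpa [tsLhs, hR.cata_eq_false ρ hρR hρt] using hmax ρ hρR hρt
  · refine Multiset.count_eq_zero.mpr fun hmem => hx ?_
    obtain ⟨ρ, hρ, rfl⟩ := Multiset.mem_map.mp hmem
    exact ⟨ρ, hrs ρ hρ, rfl⟩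

lemma tsStep1_eq (hR : IsDeterministic R t) {cfg cfg₁ cfg₂ : Multiset G × Multiset G}
    (h₁ : TSStep1 R t cfg cfg₁) (h₂ : TSStep1 R t cfg cfg₂) : cfg₁ = cfg₂ := by
  obtain ⟨rs₁, -, hrs₁, hle₁, hmax₁, h₁1, h₁2⟩ := h₁
  obtain ⟨rs₂, -, hrs₂, hle₂, hmax₂, h₂1, h₂2⟩ := h₂
  have hrs : rs₁ = rs₂ := by
    refine Multiset.eq_of_map_eq_of_injOn hR.lhs_injOn hrs₁ hrs₂ ?_
    rw [hR.map_lhs_eq_filter hrs₁ hle₁ hmax₁, hR.map_lhs_eq_filter hrs₂ hle₂ hmax₂]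
  subst hrs
  exact Prod.ext (h₁1.trans h₂1.symm) (h₁2.trans h₂2.symm)

lemma tsOut_le_of_lhs_mem (hR : IsDeterministic R t) {w s : Multiset G}
    {cfg' : Multiset G × Multiset G} (h : TSStep1 R t (w, s) cfg') {ρ : TSRule G} (hρR : ρ ∈ R)
    (hρt : ρ.tgt = t) (hρw : ρ.lhs ∈ w) : tsOut ρ ≤ cfg'.2 := by
  classical
  obtain ⟨rs, -, hrs, hle, hmax, -, hout⟩ := h
  have hlhs : ρ.lhs ∈ rs.map TSRule.lhs := by
    rw [hR.map_lhs_eq_filter hrs hle hmax]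
    exact Multiset.mem_filter.mpr ⟨hρw, ρ, ⟨hρR, hρt⟩, rfl⟩
  obtain ⟨σ, hσ, hσρ⟩ := Multiset.mem_map.mp hlhs
  rw [← hR.lhs_injOn (hrs σ hσ) ⟨hρR, hρt⟩ hσρ, hout]
  exact (Multiset.le_sum_of_mem (Multiset.mem_map_of_mem tsOut hσ)).trans le_add_self

end IsDeterministic

end Steps

lemma Rminus_isDeterministic_out : IsDeterministic Rminus Tgt.out where
  cata_eq_false ρ hρ ht := by
    simp only [Rminus, Set.mem_insert_iff, Set.mem_singleton_iff] at hρ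
    rcases hρ with rfl|rfl|rfl|rfl|rfl|rfl|rfl|rfl|rfl|rfl|rfl <;> simp_all
  lhs_injOn ρ hρ σ hσ h := by
    obtain ⟨hρ, hρt⟩ := hρ
    obtain ⟨hσ, hσt⟩ := hσ
    simp only [Rminus, Set.mem_insert_iff, Set.mem_singleton_iff] at hρ hσ
    rcases hρ with rfl|rfl|rfl|rfl|rfl|rfl|rfl|rfl|rfl|rfl|rfl <;>
      rcases hσ with rfl|rfl|rfl|rfl|rfl|rfl|rfl|rfl|rfl|rfl|rfl <;> simp_all

lemma tsStep1_Rminus_here (k m : ℕ) (s : Multiset G) :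
    TSStep1 Rminus Tgt.here
      ({c, li', d} + Multiset.replicate (k + 1) ar' + Multiset.replicate m a3r, s)
      ({c, lj'', d} + Multiset.replicate k ar' + Multiset.replicate m a3r, s) := by
  have hrest : ∀ ρ ∈ Rminus, ρ.tgt = Tgt.here →
      ¬ tsLhs ρ ≤ {d} + Multiset.replicate k ar' + Multiset.replicate m a3r := by
    intro ρ hρ ht
    simp only [Rminus, Set.mem_insert_iff, Set.mem_singleton_iff] at hρ
    rcases hρ with rfl|rfl|rfl|rfl|rfl|rfl|rfl|rfl|rfl|rfl|rfl <;>
      simp_all [tsLhs, Multiset.mem_replicate, Multiset.cons_le_of_notMem]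
  convert tsStep1_sum_tsLhs_add (rs := {⟨false, li', {lj''}, Tgt.here⟩, ⟨true, ar', 0, Tgt.here⟩})
    _ s (by simp) (by simp [Rminus]) hrest using 2
  all_goals ext x; cases x <;> simp [tsLhs, tsHere, tsOut, Multiset.count_replicate]

lemma tsStep1_Rminus_out (k m : ℕ) (s : Multiset G) :
    TSStep1 Rminus Tgt.out
      ({c, lj'', d} + Multiset.replicate k ar' + Multiset.replicate m a3r, s)
      ({c}, s + ({lj} + Multiset.replicate k ar + Multiset.replicate m a3r)) := by
  have hrest : ∀ ρ ∈ Rminus, ρ.tgt = Tgt.out → ¬ tsLhs ρ ≤ {c} := by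
    intro ρ hρ ht
    simp only [Rminus, Set.mem_insert_iff, Set.mem_singleton_iff] at hρ
    rcases hρ with rfl|rfl|rfl|rfl|rfl|rfl|rfl|rfl|rfl|rfl|rfl <;> simp_all [tsLhs]
  convert tsStep1_sum_tsLhs_add
    (rs := ⟨false, lj'', {lj}, Tgt.out⟩ ::ₘ ⟨false, d, 0, Tgt.out⟩ ::ₘ
      (Multiset.replicate k ⟨false, ar', {ar}, Tgt.out⟩ +
        Multiset.replicate m ⟨false, a3r, {a3r}, Tgt.out⟩))
    _ s (by simp) (by simp [Rminus, Multiset.mem_replicate, or_imp, forall_and]) hrest using 2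
  all_goals ext x; cases x <;> simp [tsLhs, tsHere, tsOut, Multiset.count_replicate]

/-- correctness of the decrement gadget of membrane `−`.
From `c l_i' d (a_r')^k (a_{3-r})^m` with `k ≥ 1`:
(i) the here-step applying `l_i' → l_j''` and `c a_r' → c` erases exactly one `a_r'`,
leading to `c l_j'' d (a_r')^(k-1) (a_{3-r})^m`;
(ii) from there, any out-step is possible and any such step sends exactly
`l_j (a_r)^(k-1) (a_{3-r})^m` to the surrounding region, leaving only the catalyst;
(iii) any out-step attempted directly in the first step introduces the trap symbol `#`. -/
theorem statement5 (k m : ℕ) (hk : 1 ≤ k) (s : Multiset G)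
    (w0 w1 : Multiset G)
    (hw0 : w0 = {c, li', d} + Multiset.replicate k ar' + Multiset.replicate m a3r)
    (hw1 : w1 = {c, lj'', d} + Multiset.replicate (k - 1) ar' + Multiset.replicate m a3r) :
    -- (i) the intended first (here-)step exists and erases exactly one `a_r'`
    TSStep1 Rminus Tgt.here (w0, s) (w1, s) ∧
    -- (ii) the second (out-)step exists and is forced
    TSStep1 Rminus Tgt.out (w1, s)
      ({c}, s + ({lj} + Multiset.replicate (k - 1) ar + Multiset.replicate m a3r)) ∧
    (∀ cfg' : Multiset G × Multiset G, TSStep1 Rminus Tgt.out (w1, s) cfg' →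
        cfg' = ({c}, s + ({lj} + Multiset.replicate (k - 1) ar + Multiset.replicate m a3r))) ∧
    -- (iii) choosing the target `out` in the first step necessarily introduces `#`
    (∀ cfg' : Multiset G × Multiset G, TSStep1 Rminus Tgt.out (w0, s) cfg' →
        trap ∈ cfg'.2) := by
  obtain ⟨k, rfl⟩ := Nat.exists_eq_add_of_le' hk
  subst hw0 hw1
  rw [Nat.add_sub_cancel]
  have hout := tsStep1_Rminus_out k m s
  refine ⟨tsStep1_Rminus_here k m s, hout,
    fun cfg' h => Rminus_isDeterministic_out.tsStep1_eq h hout, fun cfg' h => ?_⟩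
  have htrap := Rminus_isDeterministic_out.tsOut_le_of_lhs_mem h
    (ρ := ⟨false, li', {trap}, Tgt.out⟩) (by simp [Rminus]) rfl (by simp)
  exact Multiset.mem_of_le htrap (by simp [tsOut])
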